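/- arXiv:math/0307109 — 5 statements merged into one kernel-verified Lean document; each statement's English description precedes it below -/
import Mathlib

section
/- There exists a universal constant C > 0 such that for all ν ≥ 1 and all γ ∈ [0,1), ∫₀^{ν/2} J_ν(t)/t^γ dt ≤ C ν^{-(1/2+γ)} (e/4)^ν, where J_ν is the Bessel function of the first kind of order ν. -/
open Real MeasureTheory

/-- The Bessel function of the first kind of order `ν`, defined by its power series. -/
noncomputable def besselJ (ν t : ℝ) : ℝ :=
  ∑' m : ℕ, (-1 : ℝ) ^ m * (t / 2) ^ (ν + 2 * (m : ℝ)) / ((m.factorial : ℝ) * Real.Gamma (ν + m + 1))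

/-!
For `t > 0`, `J_ν(t) = (t/2)^ν S_ν((t/2)²)`, and Poisson's integral
`S_ν(x) = (Γ(ν+1/2) √π)⁻¹ ∫₀¹ u^{-1/2} (1-u)^{ν-1/2} cos(2√(xu)) du` gives `|S_ν(x)| ≤ 1/Γ(ν+1)`.
Integrating the resulting bound `|J_ν(t)| t^{-γ} ≤ t^{ν-γ} / (2^ν Γ(ν+1))` over `(0, ν/2)` yields
`(ν/2)^{ν-γ+1} / ((ν-γ+1) 2^ν Γ(ν+1))`, and Stirling's lower bound `Γ(ν+1) ≥ c ν^{ν+1/2} e^{-ν}`,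
carried from `⌊ν⌋` to `ν` by the log-convexity of `Γ`, turns this into `C ν^{-(1/2+γ)} (e/4)^ν`.
-/

open Set Filter
open scoped Nat

lemma ofReal_rpow_mul_one_sub_rpow {x : ℝ} (hx : x ∈ Ioo (0 : ℝ) 1) (p q : ℝ) :
    ((x ^ (p - 1) * (1 - x) ^ (q - 1) : ℝ) : ℂ) =
      (x : ℂ) ^ ((p : ℂ) - 1) * (1 - (x : ℂ)) ^ ((q : ℂ) - 1) := by
  rw [Complex.ofReal_mul, Complex.ofReal_cpow hx.1.le, Complex.ofReal_cpow (sub_nonneg.2 hx.2.le)]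
  push_cast
  rfl

lemma integrableOn_rpow_mul_one_sub_rpow {p q : ℝ} (hp : 0 < p) (hq : 0 < q) :
    IntegrableOn (fun u : ℝ => u ^ (p - 1) * (1 - u) ^ (q - 1)) (Ioo 0 1) := by
  have h := Complex.betaIntegral_convergent (u := p) (v := q) (by simpa) (by simpa)
  rw [intervalIntegrable_iff_integrableOn_Ioc_of_le zero_le_one] at h
  refine (IntegrableOn.mono_set h.norm Ioo_subset_Ioc_self).congr_fun (fun x hx => ?_)
    measurableSet_Ioo
  have : 0 ≤ x ^ (p - 1) * (1 - x) ^ (q - 1) := by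
    have := hx.1.le; have := sub_nonneg.2 hx.2.le; positivity
  dsimp only
  rw [← ofReal_rpow_mul_one_sub_rpow hx p q, Complex.norm_real, Real.norm_of_nonneg this]

lemma integral_rpow_mul_one_sub_rpow {p q : ℝ} (hp : 0 < p) (hq : 0 < q) :
    ∫ u in Ioo (0 : ℝ) 1, u ^ (p - 1) * (1 - u) ^ (q - 1) = Gamma p * Gamma q / Gamma (p + q) := by
  have h := Complex.betaIntegral_eq_Gamma_mul_div p q (by simpa) (by simpa)
  rw [Complex.betaIntegral, intervalIntegral.integral_of_le zero_le_one,
    integral_Ioc_eq_integral_Ioo,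
    ← setIntegral_congr_fun measurableSet_Ioo (fun x hx => ofReal_rpow_mul_one_sub_rpow hx p q),
    integral_complex_ofReal, ← Complex.ofReal_add, Complex.Gamma_ofReal, Complex.Gamma_ofReal,
    Complex.Gamma_ofReal] at h
  exact_mod_cast h

lemma factorial_mul_Gamma_add_half (m : ℕ) :
    (m ! : ℝ) * Gamma (m + 1 / 2) = (2 * m)! * √π / 4 ^ m := by
  have h := Gamma_mul_Gamma_add_half_of_pos (s := m + 1 / 2) (by positivity)
  rw [show (m : ℝ) + 1 / 2 + 1 / 2 = m + 1 by ring, Gamma_nat_eq_factorial,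
    show 2 * ((m : ℝ) + 1 / 2) = (2 * m : ℕ) + 1 by push_cast; ring, Gamma_nat_eq_factorial,
    show (1 : ℝ) - ((2 * m : ℕ) + 1) = -(2 * m : ℕ) by ring, rpow_neg zero_le_two,
    rpow_natCast, pow_mul] at h
  rw [mul_comm, h]
  norm_num
  ring

lemma hasSum_cos_two_mul_sqrt {y : ℝ} (hy : 0 ≤ y) :
    HasSum (fun m : ℕ => (-1) ^ m * y ^ m / (m ! * Gamma (m + 1 / 2))) (cos (2 * √y) / √π) := by
  have hterm (m : ℕ) : (-1) ^ m * y ^ m / (m ! * Gamma (m + 1 / 2)) =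
      (-1) ^ m * (2 * √y) ^ (2 * m) / (2 * m)! / √π := by
    rw [factorial_mul_Gamma_add_half, mul_pow, pow_mul, pow_mul, sq_sqrt hy]
    field_simp
    norm_num
  simpa only [hterm] using (Real.hasSum_cos (2 * √y)).div_const √π

lemma Gamma_le_Gamma_add_natCast {s : ℝ} (hs : 1 ≤ s) (m : ℕ) : Gamma s ≤ Gamma (s + m) := by
  induction m with
  | zero => simp
  | succ m ih =>
    have hpos : 0 < Gamma (s + m) := Gamma_pos_of_pos (by positivity)
    rw [Nat.cast_succ, ← add_assoc, Gamma_add_one (by positivity)]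
    nlinarith [(le_add_of_nonneg_right (Nat.cast_nonneg m) : s ≤ s + m)]

lemma summable_pow_div_factorial_mul_Gamma {ν : ℝ} (hν : 0 ≤ ν) (x : ℝ) :
    Summable fun m : ℕ => x ^ m / (m ! * Gamma (ν + m + 1)) := by
  refine Summable.of_norm_bounded ((summable_pow_div_factorial |x|).mul_right (Gamma (ν + 1))⁻¹)
    fun m => ?_
  have hΓ := Gamma_le_Gamma_add_natCast (by linarith : 1 ≤ ν + 1) m
  rw [add_right_comm] at hΓ
  have hpos : 0 < Gamma (ν + 1) := Gamma_pos_of_pos (by linarith)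
  rw [norm_div, norm_pow, Real.norm_eq_abs, Real.norm_of_nonneg (by positivity),
    show |x| ^ m / m ! * (Gamma (ν + 1))⁻¹ = |x| ^ m / (m ! * Gamma (ν + 1)) by ring]
  gcongr

/-- The entire part of `besselJ`: `besselJ ν t = (t / 2) ^ ν * besselSeries ν ((t / 2) ^ 2)`. -/
noncomputable def besselSeries (ν x : ℝ) : ℝ :=
  ∑' m : ℕ, (-1) ^ m * x ^ m / (m ! * Gamma (ν + m + 1))

/-- The weight of Poisson's integral for `besselJ ν`, after the substitution `u = sin² θ`. -/
noncomputable def poissonWeight (ν u : ℝ) : ℝ :=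
  u ^ (-(1 / 2) : ℝ) * (1 - u) ^ (ν - 1 / 2)

lemma poissonWeight_nonneg {ν u : ℝ} (hu : u ∈ Ioo (0 : ℝ) 1) : 0 ≤ poissonWeight ν u := by
  have := hu.1.le; have := sub_nonneg.2 hu.2.le
  unfold poissonWeight; positivity

lemma pow_mul_poissonWeight {ν u : ℝ} (hu : 0 < u) (m : ℕ) :
    u ^ m * poissonWeight ν u = u ^ ((m + 1 / 2 : ℝ) - 1) * (1 - u) ^ ((ν + 1 / 2) - 1) := by
  rw [poissonWeight, show (m + 1 / 2 : ℝ) - 1 = -(1 / 2) + m by ring,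
    rpow_add_natCast hu.ne', show ν + 1 / 2 - 1 = ν - 1 / 2 by ring]
  ring

lemma integrableOn_pow_mul_poissonWeight {ν : ℝ} (hν : -(1 / 2) < ν) (m : ℕ) :
    IntegrableOn (fun u => u ^ m * poissonWeight ν u) (Ioo 0 1) :=
  (integrableOn_rpow_mul_one_sub_rpow (by positivity) (by linarith)).congr_fun
    (fun _ hu => (pow_mul_poissonWeight hu.1 m).symm) measurableSet_Ioo

lemma integral_pow_mul_poissonWeight {ν : ℝ} (hν : -(1 / 2) < ν) (m : ℕ) :
    ∫ u in Ioo (0 : ℝ) 1, u ^ m * poissonWeight ν u =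
      Gamma (m + 1 / 2) * Gamma (ν + 1 / 2) / Gamma (ν + m + 1) := by
  rw [setIntegral_congr_fun measurableSet_Ioo (fun _ hu => pow_mul_poissonWeight hu.1 m),
    integral_rpow_mul_one_sub_rpow (by positivity) (by linarith)]
  ring_nf

/-- Poisson's integral representation, obtained by integrating the series of `cos` term by term
against the Beta weights. -/
lemma besselSeries_eq_integral {ν x : ℝ} (hν : 0 ≤ ν) (hx : 0 ≤ x) :
    besselSeries ν x =
      (∫ u in Ioo (0 : ℝ) 1, poissonWeight ν u * cos (2 * √(x * u))) /
        (Gamma (ν + 1 / 2) * √π) := by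
  set a : ℕ → ℝ := fun m => (-1) ^ m * x ^ m / (m ! * Gamma (m + 1 / 2))
  set F : ℕ → ℝ → ℝ := fun m u => a m * (u ^ m * poissonWeight ν u)
  have hν' : -(1 / 2) < ν := by linarith
  have hΓ : 0 < Gamma (ν + 1 / 2) := Gamma_pos_of_pos (by linarith)
  have hF_int (m : ℕ) : IntegrableOn (F m) (Ioo 0 1) :=
    (integrableOn_pow_mul_poissonWeight hν' m).const_mul (a m)
  have hF_integral (m : ℕ) : ∫ u in Ioo (0 : ℝ) 1, F m u =
      (-1) ^ m * x ^ m / (m ! * Gamma (ν + m + 1)) * Gamma (ν + 1 / 2) := by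
    have : 0 < Gamma (m + 1 / 2) := Gamma_pos_of_pos (by positivity)
    simp only [F, a, integral_const_mul, integral_pow_mul_poissonWeight hν' m]
    field_simp
  have hF_norm (m : ℕ) : ∫ u in Ioo (0 : ℝ) 1, ‖F m u‖ =
      x ^ m / (m ! * Gamma (ν + m + 1)) * Gamma (ν + 1 / 2) := by
    have : 0 < Gamma (m + 1 / 2) := Gamma_pos_of_pos (by positivity)
    rw [setIntegral_congr_fun measurableSet_Ioo (g := fun u => |a m| * (u ^ m * poissonWeight ν u))
      fun u hu => by
        rw [norm_mul, Real.norm_eq_abs, Real.norm_of_nonneg (mul_nonneg (pow_nonneg hu.1.le m)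
          (poissonWeight_nonneg hu))],
      integral_const_mul, integral_pow_mul_poissonWeight hν' m]
    simp only [a, abs_div, abs_mul, abs_pow, abs_neg, abs_one, one_pow, one_mul, abs_of_nonneg hx,
      abs_of_pos this, Nat.abs_cast]
    field_simp
  have hF_sum (u : ℝ) (hu : u ∈ Ioo (0 : ℝ) 1) :
      ∑' m, F m u = poissonWeight ν u * cos (2 * √(x * u)) / √π := by
    have h := (hasSum_cos_two_mul_sqrt (mul_nonneg hx hu.1.le)).mul_left (poissonWeight ν u)
    rw [mul_div_assoc, ← h.tsum_eq]
    exact tsum_congr fun m => by simp only [F, a, mul_pow]; ring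
  have hsummable : Summable fun m => ∫ u in Ioo (0 : ℝ) 1, ‖F m u‖ := by
    simpa only [hF_norm] using (summable_pow_div_factorial_mul_Gamma hν x).mul_right _
  have h := integral_tsum_of_summable_integral_norm hF_int hsummable
  rw [tsum_congr hF_integral, tsum_mul_right, setIntegral_congr_fun measurableSet_Ioo hF_sum,
    integral_div] at h
  rw [besselSeries, eq_div_iff (by positivity), ← mul_assoc, h, div_mul_cancel₀]
  positivity

lemma abs_besselSeries_le {ν x : ℝ} (hν : 0 ≤ ν) (hx : 0 ≤ x) :
    |besselSeries ν x| ≤ (Gamma (ν + 1))⁻¹ := by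
  have hν' : -(1 / 2) < ν := by linarith
  have hΓ : 0 < Gamma (ν + 1 / 2) := Gamma_pos_of_pos (by linarith)
  have hweight :
      ∫ u in Ioo (0 : ℝ) 1, poissonWeight ν u = Gamma (ν + 1 / 2) * √π / Gamma (ν + 1) := by
    have h := integral_pow_mul_poissonWeight hν' 0
    simp only [pow_zero, one_mul, Nat.cast_zero, zero_add, add_zero] at h
    rw [h, Gamma_one_half_eq, mul_comm (√π)]
  have hbound : |∫ u in Ioo (0 : ℝ) 1, poissonWeight ν u * cos (2 * √(x * u))| ≤
      ∫ u in Ioo (0 : ℝ) 1, poissonWeight ν u := by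
    have hw_int : IntegrableOn (poissonWeight ν) (Ioo 0 1) := by
      simpa using integrableOn_pow_mul_poissonWeight hν' 0
    rw [← Real.norm_eq_abs]
    refine norm_integral_le_of_norm_le hw_int
      ((ae_restrict_iff' measurableSet_Ioo).2 (Eventually.of_forall fun u hu => ?_))
    rw [norm_mul, Real.norm_of_nonneg (poissonWeight_nonneg hu)]
    exact mul_le_of_le_one_right (poissonWeight_nonneg hu) (abs_cos_le_one _)
  have hpos : 0 < Gamma (ν + 1 / 2) * √π := by positivity
  rw [besselSeries_eq_integral hν hx, abs_div, abs_of_pos hpos, div_le_iff₀ hpos]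
  calc _ ≤ _ := hbound
    _ = _ := by rw [hweight]; field_simp

lemma besselJ_eq_rpow_mul_besselSeries (ν : ℝ) {t : ℝ} (ht : t ≠ 0) :
    besselJ ν t = (t / 2) ^ ν * besselSeries ν ((t / 2) ^ 2) := by
  rw [besselJ, besselSeries, ← tsum_mul_left]
  refine tsum_congr fun m => ?_
  rw [show ν + 2 * (m : ℝ) = ν + (2 * m : ℕ) by push_cast; ring,
    rpow_add_natCast (div_ne_zero ht two_ne_zero), pow_mul]
  ring

lemma abs_besselJ_le {ν t : ℝ} (hν : 0 ≤ ν) (ht : 0 < t) :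
    |besselJ ν t| ≤ (t / 2) ^ ν / Gamma (ν + 1) := by
  rw [besselJ_eq_rpow_mul_besselSeries ν ht.ne', abs_mul, abs_of_nonneg (by positivity),
    div_eq_mul_inv]
  exact mul_le_mul_of_nonneg_left (abs_besselSeries_le hν (sq_nonneg _)) (by positivity)

lemma measurable_besselSeries {ν : ℝ} (hν : 0 ≤ ν) : Measurable (besselSeries ν) := by
  refine measurable_of_tendsto_metrizable (f := fun n x => ∑ m ∈ Finset.range n,
    (-1) ^ m * x ^ m / (m ! * Gamma (ν + m + 1))) (fun n => by fun_prop)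
    (tendsto_pi_nhds.2 fun x => ?_)
  refine ((summable_pow_div_factorial_mul_Gamma hν (-x)).congr fun m => ?_).hasSum.tendsto_sum_nat
  rw [neg_pow]

lemma integral_besselJ_div_rpow_le {ν γ T : ℝ} (hν : 0 ≤ ν) (hγ : γ < ν + 1) (hT : 0 ≤ T) :
    ∫ t in Ioo 0 T, besselJ ν t / t ^ γ ≤
      T ^ (ν - γ + 1) / ((ν - γ + 1) * (2 ^ ν * Gamma (ν + 1))) := by
  set g : ℝ → ℝ := fun t => t ^ (ν - γ) / (2 ^ ν * Gamma (ν + 1))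
  have hbound (t : ℝ) (ht : t ∈ Ioo 0 T) : |besselJ ν t / t ^ γ| ≤ g t := by
    have htγ : 0 < t ^ γ := rpow_pos_of_pos ht.1 γ
    rw [abs_div, abs_of_pos htγ, div_le_iff₀ htγ]
    refine (abs_besselJ_le hν ht.1).trans_eq ?_
    simp only [g]
    rw [div_rpow ht.1.le zero_le_two, rpow_sub ht.1]
    field_simp
  have hg_int : IntegrableOn g (Ioo 0 T) := by
    have h := intervalIntegral.intervalIntegrable_rpow' (a := 0) (b := T) (by linarith : -1 < ν - γ)
    rw [intervalIntegrable_iff_integrableOn_Ioc_of_le hT] at h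
    exact (h.mono_set Ioo_subset_Ioc_self).div_const _
  have hf_meas :
      AEStronglyMeasurable (fun t => besselJ ν t / t ^ γ) (volume.restrict (Ioo 0 T)) := by
    have := measurable_besselSeries hν
    have h : Measurable fun t : ℝ => (t / 2) ^ ν * besselSeries ν ((t / 2) ^ 2) / t ^ γ := by
      fun_prop
    refine h.aestronglyMeasurable.congr ((ae_restrict_iff' measurableSet_Ioo).2
      (Eventually.of_forall fun t ht => ?_))
    simp only [besselJ_eq_rpow_mul_besselSeries ν ht.1.ne']
  have hf_int : IntegrableOn (fun t => besselJ ν t / t ^ γ) (Ioo 0 T) :=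
    hg_int.mono' hf_meas ((ae_restrict_iff' measurableSet_Ioo).2
      (Eventually.of_forall fun t ht => (Real.norm_eq_abs _).trans_le (hbound t ht)))
  calc ∫ t in Ioo 0 T, besselJ ν t / t ^ γ ≤ ∫ t in Ioo 0 T, g t :=
        setIntegral_mono_on hf_int hg_int measurableSet_Ioo
          fun t ht => (le_abs_self _).trans (hbound t ht)
    _ = _ := by
      rw [integral_div, ← integral_Ioc_eq_integral_Ioo, ← intervalIntegral.integral_of_le hT,
        integral_rpow (Or.inl (by linarith)), zero_rpow (by linarith), sub_zero, div_div]

lemma rpow_mul_Gamma_add_one_le_Gamma {x θ : ℝ} (hx : 0 < x) (hθ : 0 ≤ θ) :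
    x ^ θ * Gamma (x + 1) ≤ Gamma (x + 1 + θ) := by
  have h1θ : 0 < 1 + θ := by linarith
  have hconv := convexOn_log_Gamma.2 (mem_Ioi.2 hx) (mem_Ioi.2 (by linarith : 0 < x + 1 + θ))
    (by positivity : 0 ≤ θ / (1 + θ)) (by positivity : 0 ≤ 1 / (1 + θ)) (by field_simp; ring)
  have hmid : (θ / (1 + θ)) • x + (1 / (1 + θ)) • (x + 1 + θ) = x + 1 := by
    simp only [smul_eq_mul]; field_simp; ring
  rw [hmid] at hconv
  simp only [Function.comp_apply, smul_eq_mul] at hconv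
  have hΓx := Gamma_pos_of_pos hx
  have hlog : θ * log x + log (Gamma (x + 1)) ≤ log (Gamma (x + 1 + θ)) := by
    rw [Gamma_add_one hx.ne', log_mul hx.ne' hΓx.ne'] at hconv ⊢
    have := mul_le_mul_of_nonneg_left hconv h1θ.le
    field_simp at this
    linarith
  rw [← exp_le_exp, exp_add, exp_log (Gamma_pos_of_pos (by linarith)), exp_log (by positivity),
    mul_comm θ, ← rpow_def_of_pos hx] at hlog
  exact hlog

lemma rpow_le_rpow_mul_exp {x y s : ℝ} (hx : 0 ≤ x) (hy : 0 < y) (hs : 0 ≤ s) :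
    x ^ s ≤ y ^ s * exp (s * (x - y) / y) := by
  have hxy : x / y ≤ exp (x / y - 1) := by linarith [add_one_le_exp (x / y - 1)]
  calc x ^ s = y ^ s * (x / y) ^ s := by
        rw [div_rpow hx hy.le, mul_div_cancel₀ _ (rpow_pos_of_pos hy s).ne']
    _ ≤ y ^ s * exp (x / y - 1) ^ s := by gcongr
    _ = y ^ s * exp (s * (x - y) / y) := by
        rw [← exp_mul]; congr 2; field_simp

/-- Log-convexity of `Gamma` transfers `Stirling.le_factorial_stirling` from `⌊ν⌋₊` to `ν`. -/
lemma le_Gamma_add_one_stirling {ν : ℝ} (hν : 1 ≤ ν) :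
    √(2 * π) * exp (-(3 / 2)) * ν ^ (ν + 1 / 2) * exp (-ν) ≤ Gamma (ν + 1) := by
  set n := ⌊ν⌋₊
  set θ := ν - n with hθ
  have hn : (1 : ℝ) ≤ n := by exact_mod_cast Nat.le_floor (by exact_mod_cast hν)
  have hθ0 : 0 ≤ θ := sub_nonneg.2 (Nat.floor_le (by linarith))
  have hθ1 : θ < 1 := by linarith [Nat.lt_floor_add_one ν]
  have hn0 : (0 : ℝ) < n := by linarith
  have hpow : ν ^ (ν + 1 / 2) ≤ n ^ (ν + 1 / 2) * exp (5 / 2 * θ) := by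
    refine (rpow_le_rpow_mul_exp (by linarith) hn0 (by linarith)).trans ?_
    gcongr
    rw [div_le_iff₀ hn0, ← hθ]
    nlinarith
  have hfactorial : n ^ θ * (√(2 * π * n) * (n / exp 1) ^ n) ≤ Gamma (ν + 1) := by
    have h := rpow_mul_Gamma_add_one_le_Gamma hn0 hθ0
    rw [Gamma_nat_eq_factorial, show (n : ℝ) + 1 + θ = ν + 1 by rw [hθ]; ring] at h
    exact (mul_le_mul_of_nonneg_left (Stirling.le_factorial_stirling n) (by positivity)).trans h
  have hsplit : n ^ θ * (√(2 * π * n) * (n / exp 1) ^ n) =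
      √(2 * π) * n ^ (ν + 1 / 2) * exp (-ν) * exp θ := by
    rw [show ν + 1 / 2 = θ + 1 / 2 + n by rw [hθ]; ring, rpow_add_natCast hn0.ne', rpow_add hn0,
      ← sqrt_eq_rpow, sqrt_mul (by positivity), div_pow, exp_one_pow, exp_neg,
      show ν = n + θ by rw [hθ]; ring, exp_add]
    field_simp
  calc √(2 * π) * exp (-(3 / 2)) * ν ^ (ν + 1 / 2) * exp (-ν)
      ≤ √(2 * π) * exp (-(3 / 2)) * (n ^ (ν + 1 / 2) * exp (5 / 2 * θ)) * exp (-ν) := by gcongr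
    _ = √(2 * π) * n ^ (ν + 1 / 2) * exp (-ν) * exp (-(3 / 2) + 5 / 2 * θ) := by
        rw [exp_add]; ring
    _ ≤ √(2 * π) * n ^ (ν + 1 / 2) * exp (-ν) * exp θ := by gcongr; linarith
    _ ≤ Gamma (ν + 1) := hsplit ▸ hfactorial

theorem integral_besselJ_div_rpow_small :
    ∃ C > 0, ∀ ν : ℝ, 1 ≤ ν → ∀ γ : ℝ, 0 ≤ γ → γ < 1 →
      ∫ t in Set.Ioo (0 : ℝ) (ν / 2), besselJ ν t / t ^ γ ≤
        C * ν ^ (-(1 / 2 + γ)) * (Real.exp 1 / 4) ^ ν := by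
  set c := √(2 * π) * exp (-(3 / 2))
  refine ⟨c⁻¹, by positivity, fun ν hν γ _ hγ => ?_⟩
  have hν0 : 0 < ν := by linarith
  have hhalf : (ν / 2) ^ (ν - γ + 1) ≤ ν ^ (ν - γ + 1) / 2 ^ ν := by
    rw [div_rpow hν0.le zero_le_two]
    gcongr
    · exact one_le_two
    · linarith
  have hsimplify : ν ^ (ν - γ + 1) / 2 ^ ν / (ν * (2 ^ ν * (c * ν ^ (ν + 1 / 2) * exp (-ν)))) =
      c⁻¹ * ν ^ (-(1 / 2 + γ)) * (exp 1 / 4) ^ ν := by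
    rw [show ν - γ + 1 = (ν + 1 / 2) + 1 + -(1 / 2 + γ) by ring, rpow_add hν0, rpow_add hν0,
      rpow_one, div_rpow (exp_pos 1).le (by norm_num), exp_one_rpow, exp_neg,
      show (4 : ℝ) = 2 * 2 by norm_num, mul_rpow zero_le_two zero_le_two]
    field_simp
  calc ∫ t in Set.Ioo (0 : ℝ) (ν / 2), besselJ ν t / t ^ γ
      ≤ (ν / 2) ^ (ν - γ + 1) / ((ν - γ + 1) * (2 ^ ν * Gamma (ν + 1))) :=
        integral_besselJ_div_rpow_le (by linarith) (by linarith) (by positivity)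
    _ ≤ ν ^ (ν - γ + 1) / 2 ^ ν / (ν * (2 ^ ν * (c * ν ^ (ν + 1 / 2) * exp (-ν)))) := by
        gcongr
        · linarith
        · linarith
        · exact le_Gamma_add_one_stirling hν
    _ = c⁻¹ * ν ^ (-(1 / 2 + γ)) * (exp 1 / 4) ^ ν := hsimplify
end

section
/- Let f(u) = √(q² − u^{-2}) − √(1 − u^{-2}) for u > 1, where q > 1 is fixed. Then on (1, ∞), f is decreasing (f' ≤ 0), convex (f'' ≥ 0), and f''' ≤ 0. -/
/-!
Write `f = g (q²) - g 1` with `g a v = √(a - v⁻²)`. Each of `∂ᵥg, ∂ᵥ²g, ∂ᵥ³g` is, up to a fixed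
sign, a positive combination of terms `v⁻ᵏ / g a v ^ m` with `m ≥ 1`, so for `v > 0` it is
monotone in `a` because `g a v` increases with `a`. Comparing `a = q²` with `a = 1` gives the three signs.
-/

open Set

noncomputable section

def sqrtSubInvSq (a v : ℝ) : ℝ := √(a - v⁻¹ ^ 2)

def sqrtSubInvSqDeriv₁ (a v : ℝ) : ℝ := v⁻¹ ^ 3 / sqrtSubInvSq a v

def sqrtSubInvSqDeriv₂ (a v : ℝ) : ℝ :=
  -(3 * v⁻¹ ^ 4 / sqrtSubInvSq a v + v⁻¹ ^ 6 / sqrtSubInvSq a v ^ 3)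

def sqrtSubInvSqDeriv₃ (a v : ℝ) : ℝ :=
  12 * v⁻¹ ^ 5 / sqrtSubInvSq a v + 9 * v⁻¹ ^ 7 / sqrtSubInvSq a v ^ 3
    + 3 * v⁻¹ ^ 9 / sqrtSubInvSq a v ^ 5

end

lemma hasDerivAt_inv_pow (n : ℕ) {v : ℝ} (hv : v ≠ 0) :
    HasDerivAt (fun v : ℝ => v⁻¹ ^ n) (-(n * v⁻¹ ^ (n + 1))) v := by
  have h := (hasDerivAt_inv hv).fun_pow n
  rw [← inv_pow] at h
  refine h.congr_deriv ?_
  rcases n with _ | n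
  · simp
  · rw [Nat.add_sub_cancel]
    ring

section

variable {a v : ℝ}

lemma sqrtSubInvSq_pos (ha : v⁻¹ ^ 2 < a) : 0 < sqrtSubInvSq a v :=
  Real.sqrt_pos.2 (sub_pos.2 ha)

lemma sqrtSubInvSq_mono {b : ℝ} (hab : a ≤ b) : sqrtSubInvSq a v ≤ sqrtSubInvSq b v :=
  Real.sqrt_le_sqrt (by linarith)

variable (hv : v ≠ 0) (ha : v⁻¹ ^ 2 < a)
include hv ha

lemma hasDerivAt_sqrtSubInvSq : HasDerivAt (sqrtSubInvSq a) (sqrtSubInvSqDeriv₁ a v) v := by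
  refine (((hasDerivAt_inv_pow 2 hv).const_sub a).sqrt (sub_pos.2 ha).ne').congr_deriv ?_
  rw [sqrtSubInvSqDeriv₁, sqrtSubInvSq]
  push_cast
  ring

lemma hasDerivAt_sqrtSubInvSqDeriv₁ :
    HasDerivAt (sqrtSubInvSqDeriv₁ a) (sqrtSubInvSqDeriv₂ a v) v := by
  have hs := (sqrtSubInvSq_pos ha).ne'
  refine ((hasDerivAt_inv_pow 3 hv).div (hasDerivAt_sqrtSubInvSq hv ha) hs).congr_deriv ?_
  rw [sqrtSubInvSqDeriv₂, sqrtSubInvSqDeriv₁]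
  generalize sqrtSubInvSq a v = s at hs ⊢
  generalize v⁻¹ = x
  field_simp
  ring

lemma hasDerivAt_sqrtSubInvSqDeriv₂ :
    HasDerivAt (sqrtSubInvSqDeriv₂ a) (sqrtSubInvSqDeriv₃ a v) v := by
  have hs := (sqrtSubInvSq_pos ha).ne'
  have hs' := hasDerivAt_sqrtSubInvSq hv ha
  refine ((((hasDerivAt_inv_pow 4 hv).const_mul 3).div hs' hs).add
    ((hasDerivAt_inv_pow 6 hv).div (hs'.fun_pow 3) (pow_ne_zero 3 hs))).neg.congr_deriv ?_
  rw [sqrtSubInvSqDeriv₃, sqrtSubInvSqDeriv₁]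
  generalize sqrtSubInvSq a v = s at hs ⊢
  generalize v⁻¹ = x
  field_simp
  ring

end

section

variable {a b v : ℝ}

lemma sqrtSubInvSqDeriv₁_le_of_le (hv : 0 ≤ v) (ha : v⁻¹ ^ 2 < a) (hab : a ≤ b) :
    sqrtSubInvSqDeriv₁ b v ≤ sqrtSubInvSqDeriv₁ a v := by
  have := sqrtSubInvSq_pos ha
  have := sqrtSubInvSq_mono (v := v) hab
  unfold sqrtSubInvSqDeriv₁
  gcongr

lemma sqrtSubInvSqDeriv₂_le_of_le (ha : v⁻¹ ^ 2 < a) (hab : a ≤ b) :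
    sqrtSubInvSqDeriv₂ a v ≤ sqrtSubInvSqDeriv₂ b v := by
  have := sqrtSubInvSq_pos ha
  have := sqrtSubInvSq_mono (v := v) hab
  unfold sqrtSubInvSqDeriv₂
  gcongr

lemma sqrtSubInvSqDeriv₃_le_of_le (hv : 0 ≤ v) (ha : v⁻¹ ^ 2 < a) (hab : a ≤ b) :
    sqrtSubInvSqDeriv₃ b v ≤ sqrtSubInvSqDeriv₃ a v := by
  have := sqrtSubInvSq_pos ha
  have := sqrtSubInvSq_mono (v := v) hab
  unfold sqrtSubInvSqDeriv₃
  gcongr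

lemma inv_sq_lt_of_one_lt (hv : 1 < v) (ha : 1 ≤ a) : v⁻¹ ^ 2 < a :=
  (pow_lt_one₀ (by positivity) (inv_lt_one_of_one_lt₀ hv) two_ne_zero).trans_le ha

end

section

variable {a b : ℝ} (ha : 1 ≤ a) (hb : 1 ≤ b)
include ha hb

lemma eqOn_deriv_sqrtSubInvSq_sub :
    EqOn (deriv fun v => sqrtSubInvSq b v - sqrtSubInvSq a v)
      (fun v => sqrtSubInvSqDeriv₁ b v - sqrtSubInvSqDeriv₁ a v) (Ioi 1) := fun v hv =>
  have hv₀ : v ≠ 0 := (zero_lt_one.trans hv).ne'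
  ((hasDerivAt_sqrtSubInvSq hv₀ (inv_sq_lt_of_one_lt hv hb)).sub
    (hasDerivAt_sqrtSubInvSq hv₀ (inv_sq_lt_of_one_lt hv ha))).deriv

lemma eqOn_deriv_deriv_sqrtSubInvSq_sub :
    EqOn (deriv (deriv fun v => sqrtSubInvSq b v - sqrtSubInvSq a v))
      (fun v => sqrtSubInvSqDeriv₂ b v - sqrtSubInvSqDeriv₂ a v) (Ioi 1) := fun v hv =>
  have hv₀ : v ≠ 0 := (zero_lt_one.trans hv).ne'
  ((eqOn_deriv_sqrtSubInvSq_sub ha hb).deriv isOpen_Ioi hv).trans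
    ((hasDerivAt_sqrtSubInvSqDeriv₁ hv₀ (inv_sq_lt_of_one_lt hv hb)).sub
      (hasDerivAt_sqrtSubInvSqDeriv₁ hv₀ (inv_sq_lt_of_one_lt hv ha))).deriv

lemma eqOn_deriv_deriv_deriv_sqrtSubInvSq_sub :
    EqOn (deriv (deriv (deriv fun v => sqrtSubInvSq b v - sqrtSubInvSq a v)))
      (fun v => sqrtSubInvSqDeriv₃ b v - sqrtSubInvSqDeriv₃ a v) (Ioi 1) := fun v hv =>
  have hv₀ : v ≠ 0 := (zero_lt_one.trans hv).ne'
  ((eqOn_deriv_deriv_sqrtSubInvSq_sub ha hb).deriv isOpen_Ioi hv).trans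
    ((hasDerivAt_sqrtSubInvSqDeriv₂ hv₀ (inv_sq_lt_of_one_lt hv hb)).sub
      (hasDerivAt_sqrtSubInvSqDeriv₂ hv₀ (inv_sq_lt_of_one_lt hv ha))).deriv

end

/-- Monotonicity and convexity properties of `f(u) = √(q² − u⁻²) − √(1 − u⁻²)`. -/
theorem f_deriv_signs (q : ℝ) (hq : 1 < q) :
    ∀ u : ℝ, 1 < u →
      deriv (fun v : ℝ => Real.sqrt (q ^ 2 - v⁻¹ ^ 2) - Real.sqrt (1 - v⁻¹ ^ 2)) u ≤ 0 ∧
      0 ≤ deriv (deriv (fun v : ℝ => Real.sqrt (q ^ 2 - v⁻¹ ^ 2) - Real.sqrt (1 - v⁻¹ ^ 2))) u ∧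
      deriv (deriv (deriv (fun v : ℝ =>
        Real.sqrt (q ^ 2 - v⁻¹ ^ 2) - Real.sqrt (1 - v⁻¹ ^ 2)))) u ≤ 0 := by
  intro u hu
  have hq₂ : 1 ≤ q ^ 2 := one_le_pow₀ hq.le
  have hu₀ : 0 ≤ u := zero_le_one.trans hu.le
  have hu₁ : u⁻¹ ^ 2 < 1 := inv_sq_lt_of_one_lt hu le_rfl
  refine ⟨?_, ?_, ?_⟩
  · exact (eqOn_deriv_sqrtSubInvSq_sub le_rfl hq₂ hu).trans_le
      (sub_nonpos.2 (sqrtSubInvSqDeriv₁_le_of_le hu₀ hu₁ hq₂))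
  · exact (sub_nonneg.2 (sqrtSubInvSqDeriv₂_le_of_le hu₁ hq₂)).trans_eq
      (eqOn_deriv_deriv_sqrtSubInvSq_sub le_rfl hq₂ hu).symm
  · exact (eqOn_deriv_deriv_deriv_sqrtSubInvSq_sub le_rfl hq₂ hu).trans_le
      (sub_nonpos.2 (sqrtSubInvSqDeriv₃_le_of_le hu₀ hu₁ hq₂))
end

section
/- Let q = 1 + ν^{-η} and u₀ = 1 + ν^{-γ} with ν ≥ 2, η > 0, γ ∈ [0, 1/3], and set ξ = min(η, γ). With f(u) = √(q² − u^{-2}) − √(1 − u^{-2}), there is a universal constant C > 0 such that −f'(u₀) ≥ C ν^{γ/2 + ξ − η}. -/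
/-! With `A = √(1 - u⁻²)` and `B = √(q² - u⁻²)` one has
`-f'(u) = u⁻³ (A⁻¹ - B⁻¹) = u⁻³ (B² - A²) / (A B (A + B))` and `B² - A² = q² - 1`.
At `u = 1 + a`, `q = 1 + b` with `a = ν^(-γ)`, `b = ν^(-η)` in `(0, 1]`, the numerator is at least
`2b`, while `A ≲ √a` and `A, B ≲ √(max a b)`; hence `-f'(u₀) ≳ b / (√a · max a b)`, which is
`ν^(γ/2 + min η γ - η)`. -/

open Real

lemma hasDerivAt_sqrt_sub_inv_sq {c u : ℝ} (hu : u ≠ 0) (hc : 0 < c - u⁻¹ ^ 2) :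
    HasDerivAt (fun v : ℝ => √(c - v⁻¹ ^ 2)) (u⁻¹ ^ 3 / √(c - u⁻¹ ^ 2)) u := by
  convert (((hasDerivAt_inv hu).fun_pow 2).const_sub c).sqrt hc.ne' using 1
  norm_num
  ring

lemma inv_sq_lt_one_of_one_lt {u : ℝ} (hu : 1 < u) : u⁻¹ ^ 2 < 1 :=
  pow_lt_one₀ (inv_nonneg.2 (by linarith)) (inv_lt_one_of_one_lt₀ hu) two_ne_zero

lemma neg_deriv_sqrt_sub_sqrt {q u : ℝ} (hq : 1 ≤ q) (hu : 1 < u) :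
    -deriv (fun v : ℝ => √(q ^ 2 - v⁻¹ ^ 2) - √(1 - v⁻¹ ^ 2)) u =
      u⁻¹ ^ 3 * ((√(1 - u⁻¹ ^ 2))⁻¹ - (√(q ^ 2 - u⁻¹ ^ 2))⁻¹) := by
  have hu_inv := inv_sq_lt_one_of_one_lt hu
  have h1 : 0 < 1 - u⁻¹ ^ 2 := by linarith
  have hq : 0 < q ^ 2 - u⁻¹ ^ 2 := by nlinarith
  have hu0 : u ≠ 0 := by positivity
  rw [((hasDerivAt_sqrt_sub_inv_sq hu0 hq).fun_sub (hasDerivAt_sqrt_sub_inv_sq hu0 h1)).deriv]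
  ring

lemma one_sub_inv_one_add_sq_le {a : ℝ} (ha : 0 ≤ a) : 1 - (1 + a)⁻¹ ^ 2 ≤ 2 * a := by
  field_simp
  nlinarith [mul_nonneg ha (sq_nonneg a), sq_nonneg a]

lemma sub_sq_div_le_inv_sub_inv {A B δ : ℝ} (hA : 0 < A) (hAB : A ≤ B)
    (hδ : A * B * (A + B) ≤ δ) : (B ^ 2 - A ^ 2) / δ ≤ A⁻¹ - B⁻¹ := by
  have hB : 0 < B := hA.trans_le hAB
  rw [show A⁻¹ - B⁻¹ = (B ^ 2 - A ^ 2) / (A * B * (A + B)) by field_simp; ring]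
  gcongr
  nlinarith

lemma sqrt_le_mul_sqrt_of_le_sq_mul {x y c : ℝ} (hc : 0 ≤ c) (hxy : x ≤ c ^ 2 * y) :
    √x ≤ c * √y := by
  rw [← sqrt_sq hc, ← sqrt_mul (sq_nonneg c)]
  exact sqrt_le_sqrt hxy

lemma neg_deriv_ge_at_one_add {a b : ℝ} (ha : 0 < a) (ha1 : a ≤ 1) (hb : 0 < b) (hb1 : b ≤ 1) :
    120⁻¹ * (b / (√a * max a b)) ≤
      -deriv (fun v : ℝ => √((1 + b) ^ 2 - v⁻¹ ^ 2) - √(1 - v⁻¹ ^ 2)) (1 + a) := by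
  rw [neg_deriv_sqrt_sub_sqrt (by linarith) (by linarith)]
  set m := max a b
  set A := √(1 - (1 + a)⁻¹ ^ 2)
  set B := √((1 + b) ^ 2 - (1 + a)⁻¹ ^ 2)
  have ham : a ≤ m := le_max_left a b
  have hbm : b ≤ m := le_max_right a b
  have hε : 1 - (1 + a)⁻¹ ^ 2 ≤ 2 * a := one_sub_inv_one_add_sq_le ha.le
  have hε0 : 0 < 1 - (1 + a)⁻¹ ^ 2 := by
    linarith [inv_sq_lt_one_of_one_lt (show 1 < 1 + a by linarith)]
  have hA : 0 < A := sqrt_pos.2 hε0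
  have hA_le : A ≤ 2 * √a := sqrt_le_mul_sqrt_of_le_sq_mul (by norm_num) (by linarith)
  have hA_le' : A ≤ 2 * √m := hA_le.trans (by gcongr)
  have hB_le : B ≤ 3 * √m := sqrt_le_mul_sqrt_of_le_sq_mul (by norm_num) (by nlinarith)
  have hAB : A ≤ B := sqrt_le_sqrt (by nlinarith)
  have hBA : 2 * b ≤ B ^ 2 - A ^ 2 := by
    rw [sq_sqrt hε0.le, sq_sqrt (by nlinarith)]
    nlinarith
  have hδ : A * B * (A + B) ≤ 30 * (√a * m) :=
    calc A * B * (A + B) ≤ 2 * √a * (3 * √m) * (2 * √m + 3 * √m) := by gcongr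
      _ = 30 * (√a * m) := by linear_combination 30 * √a * mul_self_sqrt (ha.le.trans ham)
  have hcube : (2⁻¹ : ℝ) ^ 3 ≤ (1 + a)⁻¹ ^ 3 := by gcongr; linarith
  calc 120⁻¹ * (b / (√a * m))
      = 2⁻¹ ^ 3 * (2 * b / (30 * (√a * m))) := by ring
    _ ≤ (1 + a)⁻¹ ^ 3 * ((B ^ 2 - A ^ 2) / (30 * (√a * m))) := by gcongr
    _ ≤ (1 + a)⁻¹ ^ 3 * (A⁻¹ - B⁻¹) := by
        gcongr
        exact sub_sq_div_le_inv_sub_inv hA hAB hδ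

lemma rpow_neg_div_sqrt_mul_max {ν : ℝ} (hν : 1 ≤ ν) (η γ : ℝ) :
    ν ^ (-η) / (√(ν ^ (-γ)) * max (ν ^ (-γ)) (ν ^ (-η))) = ν ^ (γ / 2 + min η γ - η) := by
  have hν0 : 0 < ν := by linarith
  rw [← (monotone_rpow_of_base_ge_one hν).map_max, max_neg_neg, sqrt_eq_rpow,
    ← rpow_mul hν0.le, ← rpow_add hν0, ← rpow_sub hν0, min_comm]
  ring_nf

theorem neg_f_deriv_lower_bound :
    ∃ C > 0, ∀ (ν η γ : ℝ), 2 ≤ ν → 0 < η → γ ∈ Set.Icc (0 : ℝ) (1 / 3) →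
      -deriv (fun v : ℝ =>
          Real.sqrt ((1 + ν ^ (-η)) ^ 2 - v⁻¹ ^ 2) - Real.sqrt (1 - v⁻¹ ^ 2))
        (1 + ν ^ (-γ)) ≥
      C * ν ^ (γ / 2 + min η γ - η) := by
  refine ⟨120⁻¹, by norm_num, fun ν η γ hν hη hγ => ?_⟩
  have hν1 : 1 ≤ ν := by linarith
  have key := neg_deriv_ge_at_one_add
    (by positivity) (rpow_le_one_of_one_le_of_nonpos hν1 (neg_nonpos.2 hγ.1))
    (by positivity) (rpow_le_one_of_one_le_of_nonpos hν1 (neg_nonpos.2 hη.le))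
  rwa [rpow_neg_div_sqrt_mul_max hν1] at key
end

section
/- Let σ ≥ 1, p > 0, γ ≥ 1, and define f(u) = (p+2)u / (√((p+1)²u² − σ²) + √(u² − σ²)) for u > σ, and a = f(σ + σ^γ)/(σ + σ^γ). Then for all u ≥ 2σ with u ≥ σ + σ^γ or u ≤ σ + σ^γ, one has |f(u) − a u| ≥ |σ + σ^γ − u| · a, and consequently the phase φ(u) = −(a/2)u² + θ((p+1)u/p) − θ(u/p) satisfies |φ'(u)| ≥ |σ + σ^γ − u|/(σ + σ^γ). -/
/-!
Writing `f(u) = (p+2) / (√((p+1)² - (σ/u)²) + √(1 - (σ/u)²))` shows that `f` is antitone on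
`(σ, ∞)` and at least `1` there. Rationalising the denominator instead gives
`f(u) = (√((p+1)²u² - σ²) - √(u² - σ²)) / (p u)`, which is exactly the `θ`-part of `φ'(u)` because
`θ'(r) = √(r² - ν²) / r`; hence `φ'(u) = f(u) - a u`. With `w = σ + σ^γ` we have `f(w) = a w`, so
monotonicity of `f` gives `|f(u) - a u| ≥ a |w - u|`, and `a = f(w) / w ≥ 1 / w`.
-/

open Real Set

-- `debyePhase ν` and `phaseSlope σ p` are the paper's `θ` and `f`.
noncomputable def debyePhase (ν r : ℝ) : ℝ := √(r ^ 2 - ν ^ 2) - ν * arccos (ν / r) - π / 4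

noncomputable def phaseSlope (σ p u : ℝ) : ℝ :=
  (p + 2) * u / (√((p + 1) ^ 2 * u ^ 2 - σ ^ 2) + √(u ^ 2 - σ ^ 2))

theorem hasDerivAt_debyePhase {ν r : ℝ} (hνr : |ν| < r) :
    HasDerivAt (debyePhase ν) (√(r ^ 2 - ν ^ 2) / r) r := by
  have hr : 0 < r := (abs_nonneg ν).trans_lt hνr
  have hX : 0 < r ^ 2 - ν ^ 2 := by nlinarith [sq_abs ν, abs_nonneg ν]
  have hνr' : |ν / r| < 1 := by rwa [abs_div, abs_of_pos hr, div_lt_one hr]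
  have hsqrt : HasDerivAt (fun r => √(r ^ 2 - ν ^ 2)) (2 * r / (2 * √(r ^ 2 - ν ^ 2))) r :=
    ((hasDerivAt_pow 2 r).sub_const _).sqrt hX.ne' |>.congr_deriv (by ring)
  have hquot : HasDerivAt (fun r => ν / r) (-(ν / r ^ 2)) r := by
    simpa [div_eq_mul_inv] using (hasDerivAt_inv hr.ne').const_mul ν
  have harccos := ((hasDerivAt_arccos (abs_lt.mp hνr').1.ne' (abs_lt.mp hνr').2.ne).comp r
    hquot).const_mul ν
  refine ((hsqrt.sub harccos).sub_const (π / 4)).congr_deriv ?_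
  have hs : √(1 - (ν / r) ^ 2) = √(r ^ 2 - ν ^ 2) / r := by
    rw [show 1 - (ν / r) ^ 2 = (r ^ 2 - ν ^ 2) / r ^ 2 by field_simp, sqrt_div hX.le,
      sqrt_sq hr.le]
  have hsq : √(r ^ 2 - ν ^ 2) ^ 2 = r ^ 2 - ν ^ 2 := sq_sqrt hX.le
  have hpos : 0 < √(r ^ 2 - ν ^ 2) := sqrt_pos.mpr hX
  rw [hs]
  field_simp
  linear_combination -hsq

theorem hasDerivAt_debyePhase_mul_div {σ p c u : ℝ} (hp : 0 < p) (hσ : |σ| < c * u) :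
    HasDerivAt (fun u => debyePhase (σ / p) (c * u / p)) (√((c * u) ^ 2 - σ ^ 2) / (p * u)) u := by
  have hcu : 0 < c * u := (abs_nonneg σ).trans_lt hσ
  have hc : c ≠ 0 := by rintro rfl; simp at hcu
  have hu : u ≠ 0 := by rintro rfl; simp at hcu
  have hνr : |σ / p| < c * u / p := by
    rwa [abs_div, abs_of_pos hp, div_lt_div_iff_of_pos_right hp]
  have hlin : HasDerivAt (fun u => c * u / p) (c / p) u := by
    simpa using ((hasDerivAt_id u).const_mul c).div_const p
  refine ((hasDerivAt_debyePhase hνr).comp u hlin).congr_deriv ?_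
  rw [show (c * u / p) ^ 2 - (σ / p) ^ 2 = ((c * u) ^ 2 - σ ^ 2) / p ^ 2 by field_simp,
    sqrt_div' _ (sq_nonneg p), sqrt_sq hp.le]
  field_simp

theorem phaseSlope_eq_div {σ p u : ℝ} (hu : 0 < u) :
    phaseSlope σ p u = (p + 2) / (√((p + 1) ^ 2 - (σ / u) ^ 2) + √(1 - (σ / u) ^ 2)) := by
  have hscale (c : ℝ) : √(c * u ^ 2 - σ ^ 2) = u * √(c - (σ / u) ^ 2) := by
    rw [show c * u ^ 2 - σ ^ 2 = u ^ 2 * (c - (σ / u) ^ 2) by field_simp, sqrt_mul (sq_nonneg u),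
      sqrt_sq hu.le]
  rw [phaseSlope, hscale, ← one_mul (u ^ 2), hscale, mul_comm _ u, ← mul_add,
    mul_div_mul_left _ _ hu.ne']

theorem phaseSlope_eq_sqrt_sub_sqrt {σ p u : ℝ} (hp : 0 < p) (hσu : |σ| < u) :
    phaseSlope σ p u = (√((p + 1) ^ 2 * u ^ 2 - σ ^ 2) - √(u ^ 2 - σ ^ 2)) / (p * u) := by
  have hu : 0 < u := (abs_nonneg σ).trans_lt hσu
  have hB : 0 ≤ u ^ 2 - σ ^ 2 := by nlinarith [sq_abs σ, abs_nonneg σ]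
  have hA : 0 < (p + 1) ^ 2 * u ^ 2 - σ ^ 2 := by
    nlinarith [mul_pos (mul_pos hp (by linarith : 0 < p + 2)) (pow_pos hu 2)]
  have hsum : 0 < √((p + 1) ^ 2 * u ^ 2 - σ ^ 2) + √(u ^ 2 - σ ^ 2) := by
    positivity [sqrt_pos.mpr hA]
  rw [phaseSlope, div_eq_div_iff hsum.ne' (by positivity)]
  linear_combination (sq_sqrt hB) - (sq_sqrt hA.le)

theorem sq_div_lt_one_of_abs_lt {σ u : ℝ} (hσu : |σ| < u) : (σ / u) ^ 2 < 1 := by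
  have hu : 0 < u := (abs_nonneg σ).trans_lt hσu
  rwa [sq_lt_one_iff_abs_lt_one, abs_div, abs_of_pos hu, div_lt_one hu]

theorem sqrt_sub_add_sqrt_sub_pos {p t : ℝ} (hp : 0 ≤ p) (ht : t < 1) :
    0 < √((p + 1) ^ 2 - t) + √(1 - t) :=
  add_pos_of_pos_of_nonneg (sqrt_pos.mpr (by nlinarith)) (sqrt_nonneg _)

theorem phaseSlope_antitoneOn {σ p : ℝ} (hp : 0 ≤ p) : AntitoneOn (phaseSlope σ p) (Ioi |σ|) := by
  intro u (hu : |σ| < u) v (hv : |σ| < v) huv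
  have hu0 : 0 < u := (abs_nonneg σ).trans_lt hu
  have hσ : (σ / v) ^ 2 ≤ (σ / u) ^ 2 := by
    rw [div_pow, div_pow]
    gcongr
  rw [phaseSlope_eq_div hu0, phaseSlope_eq_div (hu0.trans_le huv)]
  apply div_le_div_of_nonneg_left (by positivity)
    (sqrt_sub_add_sqrt_sub_pos hp (sq_div_lt_one_of_abs_lt hu))
  gcongr

theorem one_le_phaseSlope {σ p u : ℝ} (hp : 0 ≤ p) (hσu : |σ| < u) : 1 ≤ phaseSlope σ p u := by
  have hu : 0 < u := (abs_nonneg σ).trans_lt hσu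
  rw [phaseSlope_eq_div hu, one_le_div (sqrt_sub_add_sqrt_sub_pos hp (sq_div_lt_one_of_abs_lt hσu))]
  have h1 : √((p + 1) ^ 2 - (σ / u) ^ 2) ≤ p + 1 :=
    (sqrt_le_sqrt (by nlinarith [sq_nonneg (σ / u)])).trans_eq (sqrt_sq (by linarith))
  have h2 : √(1 - (σ / u) ^ 2) ≤ 1 :=
    (sqrt_le_sqrt (by nlinarith [sq_nonneg (σ / u)])).trans_eq sqrt_one
  linarith

theorem le_abs_sub_mul_of_antitoneOn {g : ℝ → ℝ} {s : Set ℝ} (hg : AntitoneOn g s) {a w u : ℝ}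
    (hw : w ∈ s) (hu : u ∈ s) (hgw : g w = a * w) : |w - u| * a ≤ |g u - a * u| := by
  rcases le_total u w with huw | hwu
  · calc |w - u| * a = g w - a * u := by rw [abs_of_nonneg (sub_nonneg.mpr huw), hgw]; ring
      _ ≤ g u - a * u := by gcongr; exact hg hu hw huw
      _ ≤ |g u - a * u| := le_abs_self _
  · calc |w - u| * a = a * u - g w := by rw [abs_of_nonpos (sub_nonpos.mpr hwu), hgw]; ring
      _ ≤ a * u - g u := by gcongr; exact hg hw hu hwu
      _ ≤ |g u - a * u| := by rw [abs_sub_comm]; exact le_abs_self _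

theorem hasDerivAt_phase {σ p u : ℝ} (hp : 0 < p) (hσu : |σ| < u) (a : ℝ) :
    HasDerivAt (fun u => -(a / 2) * u ^ 2 + debyePhase (σ / p) ((p + 1) * u / p)
      - debyePhase (σ / p) (u / p)) (phaseSlope σ p u - a * u) u := by
  have hquad : HasDerivAt (fun u => -(a / 2) * u ^ 2) (-(a / 2) * (2 * u)) u := by
    simpa using (hasDerivAt_pow 2 u).const_mul (-(a / 2))
  have hA := hasDerivAt_debyePhase_mul_div hp (c := p + 1) (u := u) (by nlinarith [abs_nonneg σ])
  have hB := hasDerivAt_debyePhase_mul_div hp (c := 1) (u := u) (by rwa [one_mul])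
  simp only [one_mul] at hB
  refine ((hquad.add hA).sub hB).congr_deriv ?_
  rw [phaseSlope_eq_sqrt_sub_sqrt hp hσu, mul_pow]
  ring

theorem phase_deriv_lower_bound_T6_general
    (σ p γ : ℝ) (hσ : 1 ≤ σ) (hp : 0 < p) :
    let ν := σ / p
    let θ : ℝ → ℝ := fun r => Real.sqrt (r ^ 2 - ν ^ 2) - ν * Real.arccos (ν / r) - Real.pi / 4
    let f : ℝ → ℝ := fun u =>
      (p + 2) * u / (Real.sqrt ((p + 1) ^ 2 * u ^ 2 - σ ^ 2) + Real.sqrt (u ^ 2 - σ ^ 2))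
    let a := f (σ + σ ^ γ) / (σ + σ ^ γ)
    let φ : ℝ → ℝ := fun u => -(a / 2) * u ^ 2 + θ ((p + 1) * u / p) - θ (u / p)
    ∀ u : ℝ, 2 * σ ≤ u →
      |f u - a * u| ≥ |σ + σ ^ γ - u| * a ∧
      |deriv φ u| ≥ |σ + σ ^ γ - u| / (σ + σ ^ γ) := by
  intro ν θ f a φ u hu
  set w := σ + σ ^ γ
  have hσ0 : 0 < σ := by linarith
  have hσw : |σ| < w := by rw [abs_of_pos hσ0]; linarith [rpow_pos_of_pos hσ0 γ]
  have hσu : |σ| < u := by rw [abs_of_pos hσ0]; linarith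
  have hw : 0 < w := (abs_nonneg σ).trans_lt hσw
  have hfw : f w = a * w := (div_mul_cancel₀ _ hw.ne').symm
  have hgap : |w - u| * a ≤ |f u - a * u| :=
    le_abs_sub_mul_of_antitoneOn (phaseSlope_antitoneOn hp.le) hσw hσu hfw
  have hφ : deriv φ u = f u - a * u := (hasDerivAt_phase hp hσu a).deriv
  have ha : 1 / w ≤ a := div_le_div_of_nonneg_right (one_le_phaseSlope hp.le hσw) hw.le
  refine ⟨hgap, ?_⟩
  calc |w - u| / w = |w - u| * (1 / w) := by ring
    _ ≤ |w - u| * a := by gcongr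
    _ ≤ |deriv φ u| := hφ ▸ hgap

/-- Lower bound for the derivative of the phase in the study of `T⁶`. -/
theorem phase_deriv_lower_bound_T6
    (σ p γ : ℝ) (hσ : 1 ≤ σ) (hp : 0 < p) (hγ : 1 ≤ γ) :
    let ν := σ / p
    let θ : ℝ → ℝ := fun r => Real.sqrt (r ^ 2 - ν ^ 2) - ν * Real.arccos (ν / r) - Real.pi / 4
    let f : ℝ → ℝ := fun u =>
      (p + 2) * u / (Real.sqrt ((p + 1) ^ 2 * u ^ 2 - σ ^ 2) + Real.sqrt (u ^ 2 - σ ^ 2))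
    let a := f (σ + σ ^ γ) / (σ + σ ^ γ)
    let φ : ℝ → ℝ := fun u => -(a / 2) * u ^ 2 + θ ((p + 1) * u / p) - θ (u / p)
    ∀ u : ℝ, 2 * σ ≤ u →
      |f u - a * u| ≥ |σ + σ ^ γ - u| * a ∧
      |deriv φ u| ≥ |σ + σ ^ γ - u| / (σ + σ ^ γ) :=
  phase_deriv_lower_bound_T6_general σ p γ hσ hp
end

section
/- Let β ∈ [1/2, 1). Then the function ρ ↦ min(r,ρ)^{β−1/2} |r − ρ|^{-β} is integrable on [0,1] uniformly in r ∈ [0,1]: there is a constant C(β) such that for all r ∈ [0,1], ∫₀¹ min(r,ρ)^{β−1/2} |r−ρ|^{-β} dρ ≤ C(β). -/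
open MeasureTheory Real

/-!
Since `β ≥ 1/2` and `min r ρ ≤ 1`, the factor `min r ρ ^ (β - 1/2)` is at most `1`, so the
integral is dominated by `∫₀¹ |r - ρ| ^ (-β) = (r ^ (1 - β) + (1 - r) ^ (1 - β)) / (1 - β)`,
which is at most `2 / (1 - β)`.
-/

section AbsRpow

variable {s : ℝ}

theorem intervalIntegrable_abs_rpow (hs : -1 < s) (a b : ℝ) :
    IntervalIntegrable (fun x : ℝ => |x| ^ s) volume a b := by
  have from_zero_of_nonneg (c : ℝ) (hc : 0 ≤ c) :
      IntervalIntegrable (fun x : ℝ => |x| ^ s) volume 0 c :=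
    (intervalIntegral.intervalIntegrable_rpow' hs).congr fun x hx => by
      rw [Set.uIoc_of_le hc] at hx
      rw [abs_of_pos hx.1]
  have from_zero (c : ℝ) : IntervalIntegrable (fun x : ℝ => |x| ^ s) volume 0 c := by
    rcases le_total 0 c with hc | hc
    · exact from_zero_of_nonneg c hc
    · simpa using (from_zero_of_nonneg (-c) (neg_nonneg.mpr hc)).comp_sub_left 0
  exact (from_zero a).symm.trans (from_zero b)

theorem integral_abs_rpow_of_nonneg (hs : -1 < s) {c : ℝ} (hc : 0 ≤ c) :
    ∫ x in (0 : ℝ)..c, |x| ^ s = c ^ (s + 1) / (s + 1) := by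
  rw [intervalIntegral.integral_congr (g := fun x => x ^ s) fun x hx => by
      rw [Set.uIcc_of_le hc] at hx
      simp only [abs_of_nonneg hx.1],
    integral_rpow (Or.inl hs), zero_rpow (by linarith), sub_zero]

theorem integral_abs_sub_rpow (hs : -1 < s) {a b r : ℝ} (har : a ≤ r) (hrb : r ≤ b) :
    ∫ ρ in a..b, |r - ρ| ^ s = ((r - a) ^ (s + 1) + (b - r) ^ (s + 1)) / (s + 1) := by
  have shift : ∫ ρ in a..b, |r - ρ| ^ s = ∫ u in (a - r)..(b - r), |u| ^ s := by
    simpa [abs_sub_comm] using intervalIntegral.integral_comp_sub_right (fun u => |u| ^ s) r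
  have reflect : ∫ u in (a - r)..0, |u| ^ s = ∫ u in (0 : ℝ)..(r - a), |u| ^ s := by
    simpa using (intervalIntegral.integral_comp_neg (a := 0) (b := r - a) (fun u => |u| ^ s)).symm
  rw [shift, ← intervalIntegral.integral_add_adjacent_intervals (b := 0)
      (intervalIntegrable_abs_rpow hs _ _) (intervalIntegrable_abs_rpow hs _ _), reflect,
    integral_abs_rpow_of_nonneg hs (by linarith), integral_abs_rpow_of_nonneg hs (by linarith),
    add_div]

theorem integral_abs_sub_rpow_le (hs : -1 < s) {a b r : ℝ} (har : a ≤ r) (hrb : r ≤ b) :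
    ∫ ρ in a..b, |r - ρ| ^ s ≤ 2 * (b - a) ^ (s + 1) / (s + 1) := by
  have hs' : 0 < s + 1 := by linarith
  rw [integral_abs_sub_rpow hs har hrb, two_mul]
  gcongr

end AbsRpow

theorem uniform_integrability_schur_weight (β : ℝ) (hβ1 : 1 / 2 ≤ β) (hβ2 : β < 1) :
    ∃ C : ℝ, ∀ r ∈ Set.Icc (0 : ℝ) 1,
      ∫ ρ in Set.Ioo (0 : ℝ) 1, min r ρ ^ (β - 1 / 2) * |r - ρ| ^ (-β) ≤ C := by
  have hβ : -1 < -β := by linarith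
  refine ⟨2 / (1 - β), fun r ⟨hr0, hr1⟩ => ?_⟩
  have kernel_integrable : IntegrableOn (fun ρ => |r - ρ| ^ (-β)) (Set.Ioo 0 1) := by
    rw [← intervalIntegrable_iff_integrableOn_Ioo_of_le zero_le_one]
    simpa using (intervalIntegrable_abs_rpow hβ (r - 0) (r - 1)).comp_sub_left r
  have weight_le_one (ρ : ℝ) (hρ : ρ ∈ Set.Ioo 0 1) : min r ρ ^ (β - 1 / 2) ≤ 1 :=
    rpow_le_one (le_min hr0 hρ.1.le) (min_le_of_right_le hρ.2.le) (by linarith)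
  calc ∫ ρ in Set.Ioo (0 : ℝ) 1, min r ρ ^ (β - 1 / 2) * |r - ρ| ^ (-β)
      ≤ ∫ ρ in Set.Ioo (0 : ℝ) 1, |r - ρ| ^ (-β) := by
        refine integral_mono_of_nonneg ?_ kernel_integrable ?_ <;>
          refine ae_restrict_of_forall_mem measurableSet_Ioo fun ρ hρ => ?_
        · exact mul_nonneg (rpow_nonneg (le_min hr0 hρ.1.le) _) (rpow_nonneg (abs_nonneg _) _)
        · exact mul_le_of_le_one_left (rpow_nonneg (abs_nonneg _) _) (weight_le_one ρ hρ)
    _ = ∫ ρ in (0 : ℝ)..1, |r - ρ| ^ (-β) := by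
        rw [intervalIntegral.integral_of_le zero_le_one, integral_Ioc_eq_integral_Ioo]
    _ ≤ 2 * (1 - 0) ^ (-β + 1) / (-β + 1) := integral_abs_sub_rpow_le hβ hr0 hr1
    _ = 2 / (1 - β) := by rw [sub_zero, one_rpow, mul_one, neg_add_eq_sub]
end
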